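/- arXiv:1908.03769 — 7 statements merged into one kernel-verified Lean document; each statement's English description precedes it below -/
import Mathlib

section
/- If G' is a splitting graph of a forest G, then G' is a forest (contains no cycle). -/
/-- `α : V' → V` is a splitting map from the graph `G'` to the graph `G`. -/
def IsSplittingMap {V' V : Type*} (G' : SimpleGraph V') (G : SimpleGraph V) (α : V' → V) : Prop :=
  Function.Surjective α ∧
  (∀ v w, G'.Adj v w → G.Adj (α v) (α w)) ∧
  Set.BijOn (Sym2.map α) G'.edgeSet G.edgeSet

namespace SimpleGraph

variable {V W : Type*} {G : SimpleGraph V} {H : SimpleGraph W}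

theorem Walk.IsTrail.map_of_injOn_edgeSet (f : G →g H) (hf : Set.InjOn (Sym2.map f) G.edgeSet)
    {u v : V} {p : G.Walk u v} (hp : p.IsTrail) : (p.map f).IsTrail := by
  rw [Walk.isTrail_def, Walk.edges_map]
  exact hp.edges_nodup.map_on fun _ he _ he' => hf (p.edges_subset_edgeSet he)
    (p.edges_subset_edgeSet he')

/-- In a forest every trail is a path, so the image of a cycle, being a closed trail, is trivial. -/
theorem IsAcyclic.comap_of_injOn_edgeSet (f : G →g H) (hf : Set.InjOn (Sym2.map f) G.edgeSet)
    (hH : H.IsAcyclic) : G.IsAcyclic := by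
  intro u c hc
  have hpath : (c.map f).IsPath :=
    (hH.isPath_iff_isTrail _).mpr (hc.isTrail.map_of_injOn_edgeSet f hf)
  exact hc.not_nil <| (Walk.nil_map_iff f).mp <| Walk.isPath_iff_nil.mp hpath

end SimpleGraph

/-- If `G'` is a splitting graph of a forest `G` (a graph with no cycles),
then `G'` is a forest. -/
theorem splitting_graph_of_forest_is_forest
    {V' V : Type*} (G' : SimpleGraph V') (G : SimpleGraph V) (α : V' → V)
    (h : IsSplittingMap G' G α) (hG : G.IsAcyclic) :
    G'.IsAcyclic := by
  obtain ⟨-, hadj, hbij⟩ := h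
  exact hG.comap_of_injOn_edgeSet ⟨α, hadj _ _⟩ hbij.injOn
end

section
/- If G' is a splitting graph of G via the map α, then the induced matching number of G' is at least the induced matching number of G, i.e., ν(G) ≤ ν(G'). -/
/-- A finite set `M` of edges of `H` is an induced matching: the edges are pairwise
vertex-disjoint, and no edge of `H` intersects two distinct members of `M`. -/
def IsInducedMatching {V : Type*} (H : SimpleGraph V) (M : Finset (Sym2 V)) : Prop :=
  (↑M ⊆ H.edgeSet) ∧
  (∀ e ∈ M, ∀ f ∈ M, e ≠ f → ∀ v : V, ¬ (v ∈ e ∧ v ∈ f)) ∧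
  (∀ g ∈ H.edgeSet, ∀ e ∈ M, ∀ f ∈ M, e ≠ f →
    ¬ ((∃ u : V, u ∈ g ∧ u ∈ e) ∧ (∃ w : V, w ∈ g ∧ w ∈ f)))

/-- The induced matching number of `H`. -/
noncomputable def inducedMatchingNumber {V : Type*} (H : SimpleGraph V) : ℕ :=
  sSup {n : ℕ | ∃ M : Finset (Sym2 V), IsInducedMatching H M ∧ M.card = n}

/-!
Every edge of `G` lifts to an edge of `G'`, so an induced matching `M` of `G` lifts edge by edge
to a set `M'` of edges of `G'` of the same size. Since `α` is a graph homomorphism, a pair of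
lifted edges sharing a vertex, or joined by an edge of `G'`, would map to a pair of edges of `M`
doing the same in `G`; hence `M'` is an induced matching of `G'`.
-/

section InducedMatching

variable {V' V : Type*}

theorem IsInducedMatching.empty (H : SimpleGraph V) : IsInducedMatching H ∅ :=
  ⟨by simp, by simp, by simp⟩

theorem IsInducedMatching.card_le_inducedMatchingNumber [Finite V] {H : SimpleGraph V}
    {M : Finset (Sym2 V)} (hM : IsInducedMatching H M) : M.card ≤ inducedMatchingNumber H := by
  have := Fintype.ofFinite V
  refine le_csSup ⟨Fintype.card (Sym2 V), ?_⟩ ⟨M, hM, rfl⟩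
  rintro _ ⟨N, -, rfl⟩
  exact N.card_le_univ

theorem inducedMatchingNumber_le_of_forall_exists [Finite V'] {G' : SimpleGraph V'}
    {G : SimpleGraph V}
    (h : ∀ M, IsInducedMatching G M → ∃ M', IsInducedMatching G' M' ∧ M.card ≤ M'.card) :
    inducedMatchingNumber G ≤ inducedMatchingNumber G' := by
  refine csSup_le ⟨0, ∅, IsInducedMatching.empty G, rfl⟩ ?_
  rintro _ ⟨M, hM, rfl⟩
  obtain ⟨M', hM', hcard⟩ := h M hM
  exact hcard.trans hM'.card_le_inducedMatchingNumber

theorem IsInducedMatching.of_image [DecidableEq V] {G' : SimpleGraph V'} {G : SimpleGraph V}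
    (φ : G' →g G) {M' : Finset (Sym2 V')} (hM'E : ↑M' ⊆ G'.edgeSet)
    (hinj : Set.InjOn (Sym2.map φ) M') (hM : IsInducedMatching G (M'.image (Sym2.map φ))) :
    IsInducedMatching G' M' := by
  obtain ⟨-, hdisj, hind⟩ := hM
  have mem_image {e : Sym2 V'} (he : e ∈ M') : e.map φ ∈ M'.image (Sym2.map φ) :=
    Finset.mem_image_of_mem _ he
  have map_ne {e f : Sym2 V'} (he : e ∈ M') (hf : f ∈ M') (hef : e ≠ f) : e.map φ ≠ f.map φ :=
    (hinj.ne_iff he hf).2 hef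
  refine ⟨hM'E, ?_, ?_⟩
  · rintro e he f hf hef v ⟨hve, hvf⟩
    exact hdisj _ (mem_image he) _ (mem_image hf) (map_ne he hf hef) (φ v)
      ⟨Sym2.mem_map.2 ⟨v, hve, rfl⟩, Sym2.mem_map.2 ⟨v, hvf, rfl⟩⟩
  · rintro g hg e he f hf hef ⟨⟨u, hug, hue⟩, ⟨w, hwg, hwf⟩⟩
    exact hind _ (φ.map_mem_edgeSet hg) _ (mem_image he) _ (mem_image hf) (map_ne he hf hef)
      ⟨⟨φ u, Sym2.mem_map.2 ⟨u, hug, rfl⟩, Sym2.mem_map.2 ⟨u, hue, rfl⟩⟩,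
        ⟨φ w, Sym2.mem_map.2 ⟨w, hwg, rfl⟩, Sym2.mem_map.2 ⟨w, hwf, rfl⟩⟩⟩

end InducedMatching

theorem inducedMatchingNumber_le_of_splitting_general
    {V' V : Type*} [Fintype V']
    (G' : SimpleGraph V') (G : SimpleGraph V) (α : V' → V)
    (h : IsSplittingMap G' G α) :
    inducedMatchingNumber G ≤ inducedMatchingNumber G' := by
  classical
  obtain ⟨-, hadj, hbij⟩ := h
  let φ : G' →g G := ⟨α, hadj _ _⟩
  refine inducedMatchingNumber_le_of_forall_exists fun M hM => ?_
  obtain ⟨M', hM'E, hinj, rfl⟩ :=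
    Finset.exists_subset_injOn_image_eq_of_surjOn _ M (hbij.surjOn.mono subset_rfl hM.1)
  exact ⟨M', hM.of_image φ hM'E hinj, Finset.card_image_le⟩

/-- If `G'` is a splitting graph of `G`, then `ν(G) ≤ ν(G')`. -/
theorem inducedMatchingNumber_le_of_splitting
    {V' V : Type*} [Fintype V'] [Fintype V]
    (G' : SimpleGraph V') (G : SimpleGraph V) (α : V' → V)
    (h : IsSplittingMap G' G α) :
    inducedMatchingNumber G ≤ inducedMatchingNumber G' :=
  inducedMatchingNumber_le_of_splitting_general G' G α h
end

section
/- If G' is a splitting graph of G via α, then the maximum cardinality of a minimal vertex cover of G is at most the maximum cardinality of a minimal vertex cover of G' (i.e., bight(I(G)) ≤ bight(I(G'))). -/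
/-- A vertex cover of `H` is a (finite) set of vertices meeting every edge of `H`. -/
def IsVertexCover {V : Type*} (H : SimpleGraph V) (C : Set V) : Prop :=
  ∀ e ∈ H.edgeSet, ∃ v ∈ C, v ∈ e

/-- A minimal vertex cover: a vertex cover no proper subset of which is a vertex cover. -/
def IsMinimalVertexCover {V : Type*} (H : SimpleGraph V) (C : Finset V) : Prop :=
  IsVertexCover H ↑C ∧ ∀ D : Finset V, D ⊂ C → ¬ IsVertexCover H ↑D

/-- `bight I(H)`: the maximum cardinality of a minimal vertex cover of `H`. -/
noncomputable def bight {V : Type*} (H : SimpleGraph V) : ℕ :=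
  sSup {n : ℕ | ∃ C : Finset V, IsMinimalVertexCover H C ∧ C.card = n}

namespace IsVertexCover

variable {V' V : Type*} {H : SimpleGraph V}

theorem preimage {G' : SimpleGraph V'} {α : V' → V} {C : Set V} (hC : IsVertexCover H C)
    (hα : Set.MapsTo (Sym2.map α) G'.edgeSet H.edgeSet) : IsVertexCover G' (α ⁻¹' C) := by
  intro e he
  obtain ⟨c, hc, hce⟩ := hC _ (hα he)
  obtain ⟨v, hve, rfl⟩ := Sym2.mem_map.mp hce
  exact ⟨v, hc, hve⟩

theorem exists_isMinimalVertexCover_subset {C : Set V} (hC : IsVertexCover H C)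
    (hfin : C.Finite) : ∃ D : Finset V, ↑D ⊆ C ∧ IsMinimalVertexCover H D := by
  obtain ⟨D, hDC, hDcov, hDmin⟩ :=
    exists_minimal_le_of_wellFoundedLT (fun D : Finset V ↦ IsVertexCover H ↑D) hfin.toFinset
      (by simpa using hC)
  exact ⟨D, by simpa using hDC, hDcov, fun E hED hEcov ↦ hED.not_ge (hDmin hEcov hED.le)⟩

end IsVertexCover

namespace IsMinimalVertexCover

variable {V' V : Type*} {H : SimpleGraph V} {C : Finset V}

theorem exists_private_edge [DecidableEq V] (hC : IsMinimalVertexCover H C) {c : V}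
    (hc : c ∈ C) : ∃ e ∈ H.edgeSet, ∀ v ∈ C, v ∈ e → v = c := by
  have hnot : ¬ IsVertexCover H ↑(C.erase c) := hC.2 _ (Finset.erase_ssubset hc)
  simp only [IsVertexCover, not_forall, not_exists, not_and] at hnot
  obtain ⟨e, he, hmiss⟩ := hnot
  refine ⟨e, he, fun v hv hve ↦ ?_⟩
  by_contra hvc
  exact hmiss v (Finset.mem_erase.mpr ⟨hvc, hv⟩) hve

theorem subset_image [DecidableEq V] {G' : SimpleGraph V'} {α : V' → V}
    (hC : IsMinimalVertexCover H C) (hα : Set.SurjOn (Sym2.map α) G'.edgeSet H.edgeSet)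
    {D : Finset V'} (hD : IsVertexCover G' ↑D) (hDC : ↑D ⊆ α ⁻¹' ↑C) : C ⊆ D.image α := by
  intro c hc
  obtain ⟨e, he, hprivate⟩ := hC.exists_private_edge hc
  obtain ⟨e', he', rfl⟩ := hα he
  obtain ⟨v, hvD, hve'⟩ := hD e' he'
  have hvc : α v = c := hprivate _ (hDC hvD) (Sym2.mem_map.mpr ⟨v, hve', rfl⟩)
  exact hvc ▸ Finset.mem_image_of_mem α hvD

theorem card_le_bight [Fintype V] (hC : IsMinimalVertexCover H C) : C.card ≤ bight H :=
  le_csSup ⟨Fintype.card V, by rintro _ ⟨E, -, rfl⟩; exact E.card_le_univ⟩ ⟨C, hC, rfl⟩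

end IsMinimalVertexCover

theorem bight_le_of_splitting_general
    {V' V : Type*} [Fintype V']
    (G' : SimpleGraph V') (G : SimpleGraph V) (α : V' → V)
    (h : IsSplittingMap G' G α) :
    bight G ≤ bight G' := by
  classical
  obtain ⟨-, -, hbij⟩ := h
  refine csSup_le' ?_
  rintro _ ⟨C, hC, rfl⟩
  obtain ⟨D, hDC, hD⟩ :=
    (hC.1.preimage hbij.mapsTo).exists_isMinimalVertexCover_subset (Set.toFinite _)
  calc C.card ≤ (D.image α).card := Finset.card_le_card (hC.subset_image hbij.surjOn hD.1 hDC)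
    _ ≤ D.card := Finset.card_image_le
    _ ≤ bight G' := hD.card_le_bight

/-- If `G'` is a splitting graph of `G`, then the maximum cardinality of a minimal vertex
cover of `G` is at most that of `G'`, i.e., `bight I(G) ≤ bight I(G')`. -/
theorem bight_le_of_splitting
    {V' V : Type*} [Fintype V'] [Fintype V]
    (G' : SimpleGraph V') (G : SimpleGraph V) (α : V' → V)
    (h : IsSplittingMap G' G α) :
    bight G ≤ bight G' :=
  bight_le_of_splitting_general G' G α h
end

section
/- Let G be a graph on n vertices and G' a splitting graph of G on n' vertices. If μ and μ' denote the minimum sizes of vertex covers of G and G' respectively, then n' − μ' ≥ n − μ. (Equivalently, dim S'/I(G') ≥ dim S/I(G), where the dimension of the quotient by an edge ideal equals the number of vertices minus the minimum vertex cover size.) -/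
/-- `μ(H)`: the minimum cardinality of a vertex cover of `H`. -/
noncomputable def minVertexCoverSize {V : Type*} (H : SimpleGraph V) : ℕ :=
  sInf {n : ℕ | ∃ C : Finset V, IsVertexCover H ↑C ∧ C.card = n}

/-!
The preimage `α⁻¹(C)` of a minimum vertex cover `C` of `G` is a vertex cover of `G'`, because `α`
maps edges to edges. Its complement `α⁻¹(V ∖ C)` surjects onto `V ∖ C`, so
`n' - μ' ≥ n' - |α⁻¹(C)| = |α⁻¹(V ∖ C)| ≥ n - |C| = n - μ`.
-/

open Finset

section VertexCover

variable {V : Type*} {H : SimpleGraph V}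

theorem isVertexCover_iff {C : Set V} : IsVertexCover H C ↔ H.IsVertexCover C := by
  constructor
  · intro hC v w hvw
    obtain ⟨x, hx, hxe⟩ := hC s(v, w) hvw
    rcases Sym2.mem_iff.mp hxe with rfl | rfl
    exacts [.inl hx, .inr hx]
  · intro hC e he
    induction e using Sym2.ind with
    | _ v w =>
      rcases hC he with hv | hw
      exacts [⟨v, hv, Sym2.mem_mk_left v w⟩, ⟨w, hw, Sym2.mem_mk_right v w⟩]

theorem minVertexCoverSize_le_card {C : Finset V} (hC : H.IsVertexCover C) :
    minVertexCoverSize H ≤ #C :=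
  Nat.sInf_le ⟨C, isVertexCover_iff.mpr hC, rfl⟩

theorem exists_isVertexCover_card_eq_minVertexCoverSize [Fintype V] (H : SimpleGraph V) :
    ∃ C : Finset V, H.IsVertexCover C ∧ #C = minVertexCoverSize H := by
  classical
  have hne : {n : ℕ | ∃ C : Finset V, IsVertexCover H ↑C ∧ #C = n}.Nonempty :=
    ⟨#univ, univ, isVertexCover_iff.mpr (by simp), rfl⟩
  obtain ⟨C, hC, hCcard⟩ := Nat.sInf_mem hne
  exact ⟨C, isVertexCover_iff.mp hC, hCcard⟩

end VertexCover

theorem card_compl_le_card_compl_preimage {V' V : Type*} [Fintype V'] [Fintype V]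
    [DecidableEq V'] [DecidableEq V] {α : V' → V} (hα : Function.Surjective α) (C : Finset V) :
    #Cᶜ ≤ #({v | α v ∈ C} : Finset V')ᶜ :=
  card_le_card_of_surjOn α fun x hx ↦ by
    obtain ⟨v, rfl⟩ := hα x
    exact ⟨v, by simpa using hx, rfl⟩

/-- If `G'` is a splitting graph of `G`, with `n, n'` the numbers of vertices and `μ, μ'`
the minimum vertex cover sizes of `G, G'`, then `n' − μ' ≥ n − μ`; equivalently
`dim S'/I(G') ≥ dim S/I(G)`. -/
theorem dim_le_of_splitting
    {V' V : Type*} [Fintype V'] [Fintype V]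
    (G' : SimpleGraph V') (G : SimpleGraph V) (α : V' → V)
    (h : IsSplittingMap G' G α) :
    Fintype.card V - minVertexCoverSize G ≤ Fintype.card V' - minVertexCoverSize G' := by
  classical
  obtain ⟨C, hC, hCcard⟩ := exists_isVertexCover_card_eq_minVertexCoverSize G
  set D : Finset V' := {v | α v ∈ C}
  have hD : G'.IsVertexCover D := fun v w hvw ↦ by
    simpa [D] using hC (h.2.1 v w hvw)
  calc Fintype.card V - minVertexCoverSize G = #Cᶜ := by rw [card_compl, hCcard]
    _ ≤ #Dᶜ := card_compl_le_card_compl_preimage h.1 C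
    _ = Fintype.card V' - #D := card_compl D
    _ ≤ Fintype.card V' - minVertexCoverSize G' :=
      Nat.sub_le_sub_left (minVertexCoverSize_le_card hD) _
end

section
/- Let I be the edge ideal of a finite simple graph G in the polynomial ring S over a field K, and let x, y be vertices of G with N_G[x] ∩ N_G[y] = ∅. Then the colon ideal (I : (x − y)) equals I + (zw : z ∈ N_G(x), w ∈ N_G(y)). -/
open MvPolynomial

/-- The edge ideal of a graph `G`, generated by the monomials `X i * X j` for edges
`{i,j}` of `G`. -/
noncomputable def edgeIdeal (K : Type*) [Field K] {V : Type*} (G : SimpleGraph V) :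
    Ideal (MvPolynomial V K) :=
  Ideal.span {m | ∃ i j, G.Adj i j ∧ m = X i * X j}

/-!
`I` and the right-hand side are monomial ideals, so it suffices to show that every monomial `m` of an
`f ∈ (I : (x − y))` lies in the right-hand side. Among the monomials `n` of `f` that divide
`m` away from `x`, take one of maximal `x`-degree. The coefficient of
`n·x` in `f·(x − y)` cannot cancel, because the only other contribution comes from `n·x/y`,
of larger `x`-degree; hence `n·x ∈ I`. So either an edge avoiding `x` divides `m`, or some
neighbour `z` of `x` does. Symmetrically for `y`, and a neighbour `z` of `x` together with
a neighbour `w` of `y` gives `zw ∣ m`, since `z ≠ w`.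
-/

namespace MvPolynomial

variable {σ R : Type*}

theorem span_X_mul_X_eq_span_monomial [CommSemiring R] (P : σ → σ → Prop) :
    Ideal.span {p : MvPolynomial σ R | ∃ i j, P i j ∧ p = X i * X j} =
      Ideal.span ((fun s => monomial s 1) ''
        {s | ∃ i j, P i j ∧ s = Finsupp.single i 1 + Finsupp.single j 1}) := by
  congr 1
  ext p
  simp only [Set.mem_ofPred_eq, Set.mem_image]
  constructor
  · rintro ⟨i, j, hij, rfl⟩
    exact ⟨_, ⟨i, j, hij, rfl⟩, by rw [X, X, monomial_mul, one_mul]⟩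
  · rintro ⟨_, ⟨i, j, hij, rfl⟩, rfl⟩
    exact ⟨i, j, hij, by rw [X, X, monomial_mul, one_mul]⟩

theorem exists_le_off_of_mul_X_sub_X_mem_span_monomial [CommRing R] {x y : σ} (hxy : x ≠ y)
    {T : Set (σ →₀ ℕ)} {f : MvPolynomial σ R}
    (hf : f * (X x - X y) ∈ Ideal.span ((fun s => monomial s (1 : R)) '' T))
    {m : σ →₀ ℕ} (hm : m ∈ f.support) :
    ∃ s ∈ T, ∀ v ≠ x, s v ≤ m v := by
  classical
  rw [mem_ideal_span_monomial_image] at hf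
  obtain ⟨n, hn, hmax⟩ :=
    (f.support.filter fun n => ∀ v ≠ x, n v ≤ m v).exists_max_image (· x)
      (⟨m, Finset.mem_filter.2 ⟨hm, fun _ _ => le_rfl⟩⟩)
  obtain ⟨hnf, hnm⟩ := Finset.mem_filter.1 hn
  have hc : coeff (n + Finsupp.single x 1) (f * (X x - X y)) ≠ 0 := by
    intro h
    rw [mul_sub, coeff_sub, coeff_mul_X, sub_eq_zero] at h
    by_cases hy : n y = 0
    · rw [coeff_mul_X', if_neg (by simp [hxy.symm, hy])] at h
      exact mem_support_iff.1 hnf h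
    · set n' := n - Finsupp.single y 1 + Finsupp.single x 1
      have hn' : n' + Finsupp.single y 1 = n + Finsupp.single x 1 := by
        rw [add_right_comm,
          tsub_add_cancel_of_le (Finsupp.single_le_iff.2 (Nat.one_le_iff_ne_zero.2 hy))]
      rw [← hn', coeff_mul_X] at h
      have hn'mem : n' ∈ f.support.filter fun n => ∀ v ≠ x, n v ≤ m v := by
        refine Finset.mem_filter.2
          ⟨mem_support_iff.2 (h ▸ mem_support_iff.1 hnf), fun v hv => ?_⟩
        have := hnm v hv
        simp only [n', Finsupp.add_apply, Finsupp.tsub_apply, Finsupp.single_apply,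
          if_neg hv.symm]
        omega
      have hdeg := hmax n' hn'mem
      simp [n', hxy] at hdeg
  obtain ⟨s, hs, hsle⟩ := hf _ (mem_support_iff.2 hc)
  refine ⟨s, hs, fun v hv => ?_⟩
  calc s v ≤ (n + Finsupp.single x 1 : σ →₀ ℕ) v := hsle v
    _ = n v := by simp [hv.symm]
    _ ≤ m v := hnm v hv

end MvPolynomial

theorem Finsupp.single_add_single_le {V : Type*} {z w : V} (hzw : z ≠ w) {m : V →₀ ℕ}
    (hz : m z ≠ 0) (hw : m w ≠ 0) : Finsupp.single z 1 + Finsupp.single w 1 ≤ m := by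
  classical
  intro v
  simp only [Finsupp.add_apply, Finsupp.single_apply]
  split_ifs <;> grind

theorem SimpleGraph.single_add_single_le_or_exists_adj {V : Type*} (G : SimpleGraph V)
    {x i j : V} (hij : G.Adj i j) {m : V →₀ ℕ}
    (h : ∀ v ≠ x, (Finsupp.single i 1 + Finsupp.single j 1 : V →₀ ℕ) v ≤ m v) :
    Finsupp.single i 1 + Finsupp.single j 1 ≤ m ∨ ∃ z, G.Adj x z ∧ m z ≠ 0 := by
  classical
  by_cases hi : i = x
  · subst hi
    have := h j hij.ne.symm
    simp only [Finsupp.add_apply, Finsupp.single_eq_same,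
      Finsupp.single_eq_of_ne hij.ne.symm] at this
    exact Or.inr ⟨j, hij, by omega⟩
  by_cases hj : j = x
  · subst hj
    have := h i hij.ne
    simp only [Finsupp.add_apply, Finsupp.single_eq_same,
      Finsupp.single_eq_of_ne hij.ne] at this
    exact Or.inr ⟨i, hij.symm, by omega⟩
  refine Or.inl fun v => ?_
  by_cases hv : v = x
  · simp [hv, Ne.symm hi, Ne.symm hj]
  · exact h v hv

section

variable {K : Type*} [Field K] {V : Type*} (G : SimpleGraph V)

theorem edgeIdeal_sup_span_le_colon (x y : V) :
    edgeIdeal K G ⊔ Ideal.span {m | ∃ z w, G.Adj x z ∧ G.Adj y w ∧ m = X z * X w} ≤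
      (edgeIdeal K G).colon (Ideal.span {(X x - X y : MvPolynomial V K)}) := by
  refine sup_le (fun f hf => Ideal.mem_colon_span_singleton.2 (Ideal.mul_mem_right _ _ hf)) ?_
  rw [Ideal.span_le]
  rintro _ ⟨z, w, hxz, hyw, rfl⟩
  refine Ideal.mem_colon_span_singleton.2 ?_
  have hxz : X x * X z ∈ edgeIdeal K G := Ideal.subset_span ⟨x, z, hxz, rfl⟩
  have hyw : X y * X w ∈ edgeIdeal K G := Ideal.subset_span ⟨y, w, hyw, rfl⟩
  rw [show X z * X w * (X x - X y) = X w * (X x * X z) - X z * (X y * X w) by ring]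
  exact sub_mem (Ideal.mul_mem_left _ _ hxz) (Ideal.mul_mem_left _ _ hyw)

theorem colon_edgeIdeal_le {x y : V} (hxy : x ≠ y) (hN : ∀ z, G.Adj x z → ¬ G.Adj y z) :
    (edgeIdeal K G).colon (Ideal.span {(X x - X y : MvPolynomial V K)}) ≤
      edgeIdeal K G ⊔ Ideal.span {m | ∃ z w, G.Adj x z ∧ G.Adj y w ∧ m = X z * X w} := by
  intro f hf
  have hfx : f * (X x - X y) ∈ edgeIdeal K G := Ideal.mem_colon_span_singleton.1 hf
  have hfy : f * (X y - X x) ∈ edgeIdeal K G := by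
    rw [← neg_sub, mul_neg]
    exact neg_mem hfx
  simp_rw [← and_assoc]
  rw [edgeIdeal, span_X_mul_X_eq_span_monomial] at hfx hfy
  rw [edgeIdeal, span_X_mul_X_eq_span_monomial, span_X_mul_X_eq_span_monomial,
    ← Ideal.span_union, ← Set.image_union, mem_ideal_span_monomial_image]
  intro m hm
  obtain ⟨_, ⟨i, j, hij, rfl⟩, hx⟩ :=
    exists_le_off_of_mul_X_sub_X_mem_span_monomial hxy hfx hm
  obtain ⟨_, ⟨k, l, hkl, rfl⟩, hy⟩ :=
    exists_le_off_of_mul_X_sub_X_mem_span_monomial hxy.symm hfy hm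
  rcases G.single_add_single_le_or_exists_adj hij hx with hle | ⟨z, hxz, hz⟩
  · exact ⟨_, Or.inl ⟨i, j, hij, rfl⟩, hle⟩
  rcases G.single_add_single_le_or_exists_adj hkl hy with hle | ⟨w, hyw, hw⟩
  · exact ⟨_, Or.inl ⟨k, l, hkl, rfl⟩, hle⟩
  exact ⟨_, Or.inr ⟨z, w, ⟨hxz, hyw⟩, rfl⟩,
    Finsupp.single_add_single_le (fun h : z = w => hN z hxz (h ▸ hyw)) hz hw⟩

end

/-- Let `I = I(G)` be the edge ideal of `G` and let `x, y` be vertices of `G` with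
disjoint closed neighborhoods, `N_G[x] ∩ N_G[y] = ∅`. Then
`(I : (x − y)) = I + (zw : z ∈ N_G(x), w ∈ N_G(y))`. -/
theorem colon_edgeIdeal_of_disjoint_closed_neighborhoods
    (K : Type*) [Field K] {V : Type*} (G : SimpleGraph V) (x y : V)
    (hdisj : Disjoint (insert x (G.neighborSet x)) (insert y (G.neighborSet y))) :
    (edgeIdeal K G).colon (Ideal.span {(X x - X y : MvPolynomial V K)}) =
      edgeIdeal K G ⊔
        Ideal.span {m | ∃ z w, G.Adj x z ∧ G.Adj y w ∧ m = X z * X w} := by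
  have hxy : x ≠ y := fun h => hdisj.ne_of_mem (Set.mem_insert x _) (Set.mem_insert y _) h
  have hN : ∀ z, G.Adj x z → ¬ G.Adj y z := fun z hxz hyz =>
    hdisj.ne_of_mem (Set.mem_insert_of_mem _ hxz) (Set.mem_insert_of_mem _ hyz) rfl
  exact le_antisymm (colon_edgeIdeal_le G hxy hN) (edgeIdeal_sup_span_le_colon G x y)
end

section
/- Let G' be a splitting graph of G via α satisfying condition (1): for any two vertices v, v' of G' with α(v) = α(v'), every vertex in N_{G'}(v) is adjacent to every vertex in N_{G'}(v'). If x, y ∈ V(G') satisfy α(x) = α(y), then in the polynomial ring S' over a field, the edge ideal I = I(G') satisfies (I : (x − y)) = I. -/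
open MvPolynomial

/-!
Since `I = I(G')` is a monomial ideal, `f ∈ I` means that the support of every monomial of `f`
contains an edge. Suppose `f (x - y) ∈ I` and let `m` be a monomial of `f`. If `m` involves a
neighbour of `x` and a neighbour of `y`, these two neighbours are adjacent by condition (1).
Otherwise, say, `m` involves no neighbour of `x`. Among the monomials of `f` that involve no
neighbour of `x` and lie outside `I`, take one, `m₀`, of largest degree in `x`. Then `x m₀ ∉ I`, so
the coefficient of `x m₀` in `f (x - y)` vanishes; this forces `x m₀ / y` to be a monomial of `f`
of the same kind and of larger degree in `x`, a contradiction.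
-/

theorem Finsupp.single_add_single_le_iff {V : Type*} {i j : V} (hij : i ≠ j) {d : V →₀ ℕ} :
    single i 1 + single j 1 ≤ d ↔ i ∈ d.support ∧ j ∈ d.support := by
  classical
  simp only [le_def, mem_support_iff, add_apply, single_apply]
  constructor
  · intro h
    have hi := h i
    have hj := h j
    simp only [if_true, if_neg hij, if_neg hij.symm] at hi hj
    omega
  · rintro ⟨hi, hj⟩ v
    split_ifs <;> subst_vars <;> first | omega | exact absurd rfl hij

namespace SimpleGraph

variable {V : Type*} {G : SimpleGraph V}

theorem not_isIndepSet_iff {s : Set V} : ¬ G.IsIndepSet s ↔ ∃ i ∈ s, ∃ j ∈ s, G.Adj i j := by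
  simp only [IsIndepSet, Set.Pairwise, not_forall, not_not, exists_prop]
  exact ⟨fun ⟨i, hi, j, hj, _, h⟩ => ⟨i, hi, j, hj, h⟩,
    fun ⟨i, hi, j, hj, h⟩ => ⟨i, hi, j, hj, h.ne, h⟩⟩

theorem isIndepSet_support_add_single {d : V →₀ ℕ} (hd : G.IsIndepSet ↑d.support) {x : V}
    (hx : ∀ z, G.Adj x z → d z = 0) : G.IsIndepSet ↑(d + Finsupp.single x 1).support := by
  classical
  have hsub : ↑(d + Finsupp.single x 1).support ⊆ insert x (d.support : Set V) := by
    intro v hv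
    rcases Finset.mem_union.1 (Finsupp.support_add hv) with hv | hv
    · exact Or.inr hv
    · exact Or.inl (Finset.mem_singleton.1 (Finsupp.support_single_subset hv))
  refine Set.Pairwise.mono hsub (hd.insert fun z hz _ => ⟨fun h => ?_, fun h => ?_⟩)
  · exact Finsupp.mem_support_iff.1 hz (hx z h)
  · exact Finsupp.mem_support_iff.1 hz (hx z h.symm)

end SimpleGraph

section EdgeIdeal

open SimpleGraph

variable {K V : Type*} [Field K] {G : SimpleGraph V}

theorem edgeIdeal_eq_span_monomial :
    edgeIdeal K G = Ideal.span ((fun s => monomial s (1 : K)) ''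
      {s | ∃ i j, G.Adj i j ∧ s = Finsupp.single i 1 + Finsupp.single j 1}) := by
  rw [edgeIdeal]
  congr 1
  ext m
  simp [X, monomial_mul, eq_comm]

theorem mem_edgeIdeal_iff {f : MvPolynomial V K} :
    f ∈ edgeIdeal K G ↔ ∀ d ∈ f.support, ¬ G.IsIndepSet ↑d.support := by
  simp only [edgeIdeal_eq_span_monomial, mem_ideal_span_monomial_image, not_isIndepSet_iff]
  refine forall₂_congr fun d _ => ⟨?_, ?_⟩
  · rintro ⟨_, ⟨i, j, hij, rfl⟩, hle⟩
    obtain ⟨hi, hj⟩ := (Finsupp.single_add_single_le_iff hij.ne).1 hle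
    exact ⟨i, hi, j, hj, hij⟩
  · rintro ⟨i, hi, j, hj, hij⟩
    exact ⟨_, ⟨i, j, hij, rfl⟩, (Finsupp.single_add_single_le_iff hij.ne).2 ⟨hi, hj⟩⟩

theorem not_isIndepSet_support_of_mul_X_sub_X_mem {x y : V} (hxy : x ≠ y)
    {f : MvPolynomial V K} (hf : f * (X x - X y) ∈ edgeIdeal K G) {d : V →₀ ℕ}
    (hd : d ∈ f.support) (hx : ∀ z, G.Adj x z → d z = 0) : ¬ G.IsIndepSet ↑d.support := by
  classical
  intro hind
  set T := f.support.filter fun d => (∀ z, G.Adj x z → d z = 0) ∧ G.IsIndepSet ↑d.support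
  obtain ⟨m, hmT, hmax⟩ := T.exists_max_image (· x) ⟨d, Finset.mem_filter.2 ⟨hd, hx, hind⟩⟩
  obtain ⟨hm, hmx, hmind⟩ := Finset.mem_filter.1 hmT
  set e := m + Finsupp.single x 1
  have he : coeff e (f * (X x - X y)) = 0 := by
    by_contra he
    exact mem_edgeIdeal_iff.1 hf e (mem_support_iff.2 he) (isIndepSet_support_add_single hmind hmx)
  rw [mul_sub, coeff_sub, coeff_mul_X, coeff_mul_X', sub_eq_zero] at he
  set m' := e - Finsupp.single y 1
  have hm' : coeff m' f = coeff m f := by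
    split_ifs at he
    exacts [he.symm, absurd he (mem_support_iff.1 hm)]
  have hm'e : m' ≤ e := tsub_le_self
  have hm'T : m' ∈ T := by
    refine Finset.mem_filter.2 ⟨mem_support_iff.2 (hm' ▸ mem_support_iff.1 hm), fun z hz => ?_,
      (isIndepSet_support_add_single hmind hmx).mono
        (Finset.coe_subset.2 (Finsupp.support_mono hm'e))⟩
    simpa [e, hmx z hz, Finsupp.single_apply, hz.ne] using hm'e z
  have hm'x : m' x = m x + 1 := by simp [m', e, hxy]
  have := hmax m' hm'T
  omega

end EdgeIdeal

theorem colon_eq_self_of_special_splitting_general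
    (K : Type*) [Field K] {V' V : Type*}
    (G' : SimpleGraph V') (α : V' → V)
    (hcond1 : ∀ v v', v ≠ v' → α v = α v' →
      ∀ z w, G'.Adj v z → G'.Adj v' w → G'.Adj z w)
    (x y : V') (hxy : x ≠ y) (hα : α x = α y) :
    (edgeIdeal K G').colon (Ideal.span {(X x - X y : MvPolynomial V' K)}) =
      edgeIdeal K G' := by
  refine le_antisymm (fun f hf => ?_) fun f hf =>
    Ideal.mem_colon_span_singleton.2 (Ideal.mul_mem_right _ _ hf)
  rw [Ideal.mem_colon_span_singleton] at hf
  have hf' : f * (X y - X x) ∈ edgeIdeal K G' := by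
    rw [← neg_sub, mul_neg]
    exact neg_mem hf
  refine mem_edgeIdeal_iff.2 fun d hd => ?_
  by_cases hx : ∀ z, G'.Adj x z → d z = 0
  · exact not_isIndepSet_support_of_mul_X_sub_X_mem hxy hf hd hx
  by_cases hy : ∀ w, G'.Adj y w → d w = 0
  · exact not_isIndepSet_support_of_mul_X_sub_X_mem hxy.symm hf' hd hy
  push Not at hx hy
  obtain ⟨z, hxz, hz⟩ := hx
  obtain ⟨w, hyw, hw⟩ := hy
  exact SimpleGraph.not_isIndepSet_iff.2 ⟨z, Finsupp.mem_support_iff.2 hz,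
    w, Finsupp.mem_support_iff.2 hw, hcond1 x y hxy hα z w hxz hyw⟩

/-- Let `G'` be a splitting graph of `G` via `α` satisfying condition (1): whenever
`α v = α v'` for distinct `v, v'`, every neighbor of `v` in `G'` is adjacent to every
neighbor of `v'` in `G'`. If `x, y ∈ V(G')` are distinct with `α x = α y`, then the
edge ideal `I = I(G')` satisfies `(I : (x − y)) = I`. -/
theorem colon_eq_self_of_special_splitting
    (K : Type*) [Field K] {V' V : Type*}
    (G' : SimpleGraph V') (G : SimpleGraph V) (α : V' → V)
    (h : IsSplittingMap G' G α)
    (hcond1 : ∀ v v', v ≠ v' → α v = α v' →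
      ∀ z w, G'.Adj v z → G'.Adj v' w → G'.Adj z w)
    (x y : V') (hxy : x ≠ y) (hα : α x = α y) :
    (edgeIdeal K G').colon (Ideal.span {(X x - X y : MvPolynomial V' K)}) =
      edgeIdeal K G' :=
  colon_eq_self_of_special_splitting_general K G' α hcond1 x y hxy hα
end

section
/- If G is a connected graph with n edges, then for every integer 1 ≤ j ≤ n there exists a splitting graph G' of G with exactly j connected components. -/
theorem Set.BijOn.union_of_disjoint {α β : Type*} {f : α → β} {s₁ s₂ : Set α}
    {t₁ t₂ : Set β} (h₁ : Set.BijOn f s₁ t₁) (h₂ : Set.BijOn f s₂ t₂) (ht : Disjoint t₁ t₂) :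
    Set.BijOn f (s₁ ∪ s₂) (t₁ ∪ t₂) := by
  have hs : Disjoint s₁ s₂ := (ht.preimage f).mono h₁.mapsTo h₂.mapsTo
  refine h₁.union h₂ ((Set.injOn_union hs).mpr ⟨h₁.injOn, h₂.injOn, ?_⟩)
  exact fun x hx y hy => ht.ne_of_mem (h₁.mapsTo hx) (h₂.mapsTo hy)

namespace SimpleGraph

variable {V W : Type*}

theorem Reachable.eq_of_forall_adj {G : SimpleGraph V} {β : Sort*} {f : V → β}
    (hf : ∀ v w, G.Adj v w → f v = f w) {u v : V} (h : G.Reachable u v) : f u = f v := by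
  obtain ⟨p⟩ := h
  induction p with
  | nil => rfl
  | cons hadj _ ih => exact (hf _ _ hadj).trans ih

def ConnectedComponent.liftOfAdj {G : SimpleGraph V} {β : Sort*} (f : V → β)
    (hf : ∀ v w, G.Adj v w → f v = f w) : G.ConnectedComponent → β :=
  Quot.lift f fun _ _ h => h.eq_of_forall_adj hf

section Sum

variable (G : SimpleGraph V) (H : SimpleGraph W)

theorem edgeSet_sum :
    (G ⊕g H).edgeSet = Sym2.map Sum.inl '' G.edgeSet ∪ Sym2.map Sum.inr '' H.edgeSet := by
  have : G ⊕g H = G.map Function.Embedding.inl ⊔ H.map Function.Embedding.inr := by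
    ext (v | w) (v' | w') <;> simp [map_adj]
  rw [this, edgeSet_sup, edgeSet_map, edgeSet_map]
  rfl

def connectedComponentSumEquiv :
    (G ⊕g H).ConnectedComponent ≃ G.ConnectedComponent ⊕ H.ConnectedComponent where
  toFun := ConnectedComponent.liftOfAdj
    (Sum.map G.connectedComponentMk H.connectedComponentMk) <| by
    rintro (v | w) (v' | w') hadj <;> simp_all [Adj.reachable]
  invFun := Sum.elim (ConnectedComponent.map Embedding.sumInl.toHom)
    (ConnectedComponent.map Embedding.sumInr.toHom)
  left_inv := by rintro ⟨v | w⟩ <;> rfl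
  right_inv := by
    rintro (c | c) <;> induction c using ConnectedComponent.ind <;> rfl

theorem card_connectedComponent_sum [Finite V] [Finite W] :
    Nat.card (G ⊕g H).ConnectedComponent =
      Nat.card G.ConnectedComponent + Nat.card H.ConnectedComponent := by
  rw [Nat.card_congr (connectedComponentSumEquiv G H), Nat.card_sum]

end Sum

/-- The edges of `K`, made pairwise vertex-disjoint: each dart is adjacent to its reversal. -/
def dartSymmGraph (K : SimpleGraph V) : SimpleGraph K.Dart where
  Adj d d' := d.symm = d'
  symm := ⟨fun d d' (h : d.symm = d') => by rw [← h, Dart.symm_symm]⟩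
  loopless := ⟨Dart.symm_ne⟩

section dartSymmGraph

variable (K : SimpleGraph V)

def dartSymmGraphFst : K.dartSymmGraph →g K where
  toFun d := d.fst
  map_rel' {d _} (h : d.symm = _) := h ▸ d.adj

theorem bijOn_dartSymmGraph_edgeSet :
    Set.BijOn (Sym2.map K.dartSymmGraphFst) K.dartSymmGraph.edgeSet K.edgeSet := by
  have hmk : ∀ d : K.Dart, Sym2.map K.dartSymmGraphFst s(d, d.symm) = d.edge := fun _ => rfl
  refine ⟨?_, ?_, ?_⟩
  · rintro e he
    induction e using Sym2.ind with | h d d' =>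
    obtain rfl : d.symm = d' := he
    exact d.edge_mem
  · rintro e he e' he' heq
    induction e using Sym2.ind with | h d _ =>
    induction e' using Sym2.ind with | h d' _ =>
    obtain rfl : d.symm = _ := he
    obtain rfl : d'.symm = _ := he'
    rw [hmk, hmk, dart_edge_eq_iff] at heq
    rcases heq with rfl | rfl
    · rfl
    · rw [Dart.symm_symm, Sym2.eq_swap]
  · rintro e he
    induction e using Sym2.ind with | h a b =>
    exact ⟨s(⟨(a, b), he⟩, Dart.symm ⟨(a, b), he⟩), rfl, rfl⟩

noncomputable def connectedComponentDartSymmGraphEquiv :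
    K.dartSymmGraph.ConnectedComponent ≃ K.edgeSet := by
  refine Equiv.ofBijective (ConnectedComponent.liftOfAdj (fun d => ⟨d.edge, d.edge_mem⟩)
    fun d _ (hd : d.symm = _) => Subtype.ext (hd ▸ d.edge_symm.symm)) ⟨?_, ?_⟩
  · refine ConnectedComponent.ind₂ fun d d' h => ?_
    rcases (dart_edge_eq_iff d d').mp (congrArg Subtype.val h) with rfl | rfl
    · rfl
    · exact ConnectedComponent.connectedComponentMk_eq_of_adj (Dart.symm_symm d')
  · rintro ⟨e, he⟩
    induction e using Sym2.ind with | h a b =>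
    exact ⟨K.dartSymmGraph.connectedComponentMk ⟨(a, b), he⟩, rfl⟩

end dartSymmGraph

section Connected

variable {G : SimpleGraph V}

theorem Subgraph.exists_adj_not_adj_of_not_edgeSet_subset (hG : G.Preconnected)
    {H : G.Subgraph} (hH : H.verts.Nonempty) (h : ¬G.edgeSet ⊆ H.edgeSet) :
    ∃ a ∈ H.verts, ∃ b, G.Adj a b ∧ ¬H.Adj a b := by
  obtain ⟨e, heG, heH⟩ := Set.not_subset.mp h
  induction e using Sym2.ind with | h a b =>
  by_cases ha : a ∈ H.verts
  · exact ⟨a, ha, b, heG, heH⟩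
  obtain ⟨v, hv⟩ := hH
  obtain ⟨d, -, hd, hd'⟩ := (hG v a).some.exists_boundary_dart H.verts hv ha
  exact ⟨d.fst, hd, d.snd, d.adj, fun hH => hd' hH.snd_mem⟩

theorem Connected.exists_connected_subgraph_encard_edgeSet_eq (hG : G.Connected) {k : ℕ}
    (hk : k ≤ G.edgeSet.encard) : ∃ H : G.Subgraph, H.Connected ∧ H.edgeSet.encard = k := by
  induction k with
  | zero =>
    obtain ⟨v⟩ := hG.nonempty
    exact ⟨G.singletonSubgraph v, Subgraph.singletonSubgraph_connected, by simp⟩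
  | succ k ih =>
    obtain ⟨H, hH, hHk⟩ := ih (le_trans (by simp) hk)
    have hsub : ¬G.edgeSet ⊆ H.edgeSet := fun hsub => by
      have := hk.trans (hHk ▸ Set.encard_le_encard hsub)
      norm_cast at this
      omega
    obtain ⟨a, ha, b, hab, hab'⟩ :=
      Subgraph.exists_adj_not_adj_of_not_edgeSet_subset hG.preconnected hH.nonempty hsub
    refine ⟨H ⊔ G.subgraphOfAdj hab,
      Subgraph.connected_sup hH.preconnected (Subgraph.subgraphOfAdj_connected hab).preconnected
        ⟨a, ha, by simp⟩, ?_⟩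
    rw [Subgraph.edgeSet_sup, edgeSet_subgraphOfAdj, Set.union_singleton,
      Set.encard_insert_of_notMem (show s(a, b) ∉ H.edgeSet from hab'), hHk]
    rfl

theorem Connected.card_connectedComponent (hG : G.Connected) :
    Nat.card G.ConnectedComponent = 1 :=
  have := hG.nonempty
  Nat.card_eq_one_iff_unique.mpr
    ⟨hG.preconnected.subsingleton_connectedComponent, inferInstance⟩

end Connected

instance [Finite V] (G : SimpleGraph V) : Finite G.Dart :=
  Finite.of_injective _ Dart.toProd_injective

end SimpleGraph

open SimpleGraph

section Splitting

variable {V₁ V₂ V V' V'' : Type*} {G : SimpleGraph V}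

theorem IsSplittingMap.comp_iso {G' : SimpleGraph V'} {G'' : SimpleGraph V''} {α : V' → V}
    (h : IsSplittingMap G' G α) (φ : G'' ≃g G') : IsSplittingMap G'' G (α ∘ φ) := by
  obtain ⟨hsurj, hadj, hbij⟩ := h
  refine ⟨hsurj.comp φ.surjective, fun v w hvw => hadj _ _ (φ.map_adj_iff.mpr hvw), ?_⟩
  rw [Sym2.map_comp]
  refine hbij.comp ⟨fun e he => φ.map_mem_edgeSet_iff.mpr he,
    (Sym2.map.injective φ.injective).injOn, fun e he => ?_⟩
  refine ⟨Sym2.map φ.symm e, φ.symm.map_mem_edgeSet_iff.mpr he, ?_⟩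
  simp [Sym2.map_map]

theorem IsSplittingMap.exists_fin [Finite V'] {G' : SimpleGraph V'} {α : V' → V}
    (h : IsSplittingMap G' G α) :
    ∃ (m : ℕ) (G'' : SimpleGraph (Fin m)) (α' : Fin m → V),
      IsSplittingMap G'' G α' ∧
        Nat.card G''.ConnectedComponent = Nat.card G'.ConnectedComponent := by
  obtain ⟨m, ⟨e⟩⟩ := Finite.exists_equiv_fin V'
  let φ := Iso.comap e.symm G'
  exact ⟨m, _, _, h.comp_iso φ, Nat.card_congr φ.connectedComponentEquiv⟩

theorem isSplittingMap_sumElim {G₁ : SimpleGraph V₁} {G₂ : SimpleGraph V₂}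
    (f₁ : G₁ →g G) (f₂ : G₂ →g G) (hsurj : Function.Surjective (Sum.elim f₁ f₂))
    {t : Set (Sym2 V)} (ht : t ⊆ G.edgeSet) (h₁ : Set.BijOn (Sym2.map f₁) G₁.edgeSet t)
    (h₂ : Set.BijOn (Sym2.map f₂) G₂.edgeSet (G.edgeSet \ t)) :
    IsSplittingMap (G₁ ⊕g G₂) G (Sum.elim f₁ f₂) := by
  refine ⟨hsurj, ?_, ?_⟩
  · rintro (v | v) (w | w) h
    case inl.inl => exact f₁.map_adj h
    case inr.inr => exact f₂.map_adj h
    all_goals exact nomatch h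
  have h₁' : Set.BijOn (Sym2.map (Sum.elim f₁ f₂)) (Sym2.map Sum.inl '' G₁.edgeSet) t := by
    rwa [← Set.bijOn_comp_iff (Sym2.map.injective Sum.inl_injective).injOn, ← Sym2.map_comp,
      Sum.elim_comp_inl]
  have h₂' : Set.BijOn (Sym2.map (Sum.elim f₁ f₂)) (Sym2.map Sum.inr '' G₂.edgeSet)
      (G.edgeSet \ t) := by
    rwa [← Set.bijOn_comp_iff (Sym2.map.injective Sum.inr_injective).injOn, ← Sym2.map_comp,
      Sum.elim_comp_inr]
  rw [edgeSet_sum, ← Set.union_sdiff_cancel ht]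
  exact h₁'.union_of_disjoint h₂' Set.disjoint_sdiff_right

namespace SimpleGraph.Subgraph

variable (H : G.Subgraph)

def splitAlong : SimpleGraph (H.verts ⊕ (G \ H.spanningCoe).Dart) :=
  H.coe ⊕g (G \ H.spanningCoe).dartSymmGraph

def splitAlongMap : H.verts ⊕ (G \ H.spanningCoe).Dart → V :=
  Sum.elim H.hom ((Hom.ofLE sdiff_le).comp (G \ H.spanningCoe).dartSymmGraphFst)

theorem isSplittingMap_splitAlong (hG : G.Preconnected) (hH : H.verts.Nonempty) :
    IsSplittingMap H.splitAlong G H.splitAlongMap := by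
  refine isSplittingMap_sumElim _ _ ?_ H.edgeSet_subset ?_ ?_
  · intro v
    by_cases hv : v ∈ H.verts
    · exact ⟨.inl ⟨v, hv⟩, rfl⟩
    obtain ⟨w, hw⟩ := hH
    obtain ⟨w', hvw'⟩ : ∃ w', G.Adj v w' := by
      obtain ⟨_ | ⟨hvw', _⟩⟩ := hG v w
      · exact absurd hw hv
      · exact ⟨_, hvw'⟩
    exact ⟨.inr ⟨(v, w'), hvw', fun hH => hv hH.fst_mem⟩, rfl⟩
  · rw [← H.image_coe_edgeSet_coe]
    exact (Sym2.map.injective Subtype.val_injective).injOn.bijOn_image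
  · rw [← H.edgeSet_spanningCoe, ← edgeSet_sdiff]
    exact (G \ H.spanningCoe).bijOn_dartSymmGraph_edgeSet

theorem card_connectedComponent_splitAlong [Finite V] (hH : H.Connected) :
    Nat.card H.splitAlong.ConnectedComponent = (G.edgeSet \ H.edgeSet).ncard + 1 := by
  rw [splitAlong, card_connectedComponent_sum, Connected.card_connectedComponent hH,
    Nat.card_congr (connectedComponentDartSymmGraphEquiv _), Nat.card_coe_set_eq,
    edgeSet_sdiff, edgeSet_spanningCoe, add_comm]

end SimpleGraph.Subgraph

end Splitting

/-- If `G` is a connected graph with `n` edges, then for every `1 ≤ j ≤ n` there is a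
splitting graph `G'` of `G` with exactly `j` connected components. -/
theorem exists_splitting_with_j_components
    {V : Type} [Fintype V] [DecidableEq V] (G : SimpleGraph V) [DecidableRel G.Adj]
    (hconn : G.Connected) (j : ℕ) (hj1 : 1 ≤ j) (hjn : j ≤ G.edgeFinset.card) :
    ∃ (m : ℕ) (G' : SimpleGraph (Fin m)) (α : Fin m → V),
      IsSplittingMap G' G α ∧ Nat.card G'.ConnectedComponent = j := by
  have hn : G.edgeSet.ncard = G.edgeFinset.card := by
    rw [← coe_edgeFinset, Set.ncard_coe_finset]
  obtain ⟨H, hH, hHk⟩ := hconn.exists_connected_subgraph_encard_edgeSet_eq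
    (k := G.edgeSet.ncard + 1 - j) (by
      rw [← G.edgeSet.toFinite.cast_ncard_eq]
      exact Nat.cast_le.mpr (by omega))
  obtain ⟨m, G', α, hα, hG'⟩ :=
    (H.isSplittingMap_splitAlong hconn.preconnected hH.nonempty).exists_fin
  refine ⟨m, G', α, hα, ?_⟩
  rw [hG', H.card_connectedComponent_splitAlong hH, Set.ncard_sdiff H.edgeSet_subset,
    Set.ncard_def H.edgeSet, hHk, ENat.toNat_natCast]
  omega
end
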